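/- arXiv:2511.15920 — 5 statements merged into one kernel-verified Lean document; each statement's English description precedes it below -/
import Mathlib

section
/- If a permutation w of {1,...,n} avoids both patterns 1423 and 1432, then its Lehmer code L satisfies L(i+1) - L(i) ≤ 1 for every index i with 1 ≤ i < n. -/
/-!
For `a < b` every `j > b` with `w j < w b` either satisfies `w j < w a`, and is then counted by
`lehmer w a`, or has `w j` strictly between `w a` and `w b`. Two such `j < j'` would make
`a, b, j, j'` an occurrence of 1423 or 1432, according to the order of `w j` and `w j'`.
So `lehmer w b ≤ lehmer w a + 1` for all `a < b`, in particular for adjacent positions.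
-/

/-- Lehmer code: `lehmer w i = #{j > i : w j < w i}`. -/
def lehmer {n : ℕ} (w : Equiv.Perm (Fin n)) (i : Fin n) : ℕ :=
  (Finset.univ.filter (fun j => i < j ∧ w j < w i)).card

/-- `w` contains the pattern `σ` (given as a function `Fin k → Fin k`). -/
def ContainsPattern {n k : ℕ} (w : Equiv.Perm (Fin n)) (σ : Fin k → Fin k) : Prop :=
  ∃ f : Fin k → Fin n, StrictMono f ∧ ∀ a b : Fin k, σ a < σ b ↔ w (f a) < w (f b)

/-- The pattern 1423 (0-indexed values). -/
def p1423 : Fin 4 → Fin 4 := ![0, 3, 1, 2]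

/-- The pattern 1432 (0-indexed values). -/
def p1432 : Fin 4 → Fin 4 := ![0, 3, 2, 1]

open Finset

lemma containsPattern_of_strictMono {n k : ℕ} (w : Equiv.Perm (Fin n)) {σ : Fin k → Fin k}
    (hσ : Function.Injective σ) {f : Fin k → Fin n} (hf : StrictMono f)
    (h : ∀ a b, σ a < σ b → w (f a) < w (f b)) : ContainsPattern w σ := by
  refine ⟨f, hf, fun a b => ⟨h a b, fun hw => ?_⟩⟩
  rcases lt_trichotomy (σ a) (σ b) with hlt | heq | hgt
  · exact hlt
  · exact absurd (hσ heq ▸ hw) (lt_irrefl _)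
  · exact absurd (h b a hgt) hw.not_gt

lemma strictMono_vec_four {α : Type*} [Preorder α] {a b c d : α}
    (hab : a < b) (hbc : b < c) (hcd : c < d) : StrictMono ![a, b, c, d] :=
  Fin.strictMono_iff_lt_succ.2 fun i => by fin_cases i <;> assumption

lemma card_between_le_one {n : ℕ} {w : Equiv.Perm (Fin n)}
    (h1423 : ¬ ContainsPattern w p1423) (h1432 : ¬ ContainsPattern w p1432)
    {a b : Fin n} (hab : a < b) :
    #{j | b < j ∧ w a < w j ∧ w j < w b} ≤ 1 := by
  have no_two_between : ∀ c d, b < c → c < d → w a < w c → w c < w b → w a < w d → w d < w b → False := by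
    intro c d hbc hcd hac hcb had hdb
    have hf := strictMono_vec_four hab hbc hcd
    rcases (w.injective.ne hcd.ne).lt_or_gt with hcd' | hdc'
    · refine h1423 (containsPattern_of_strictMono w (by decide) hf fun x y hxy => ?_)
      fin_cases x <;> fin_cases y <;> simp [p1423] at hxy ⊢ <;> order
    · refine h1432 (containsPattern_of_strictMono w (by decide) hf fun x y hxy => ?_)
      fin_cases x <;> fin_cases y <;> simp [p1432] at hxy ⊢ <;> order
  refine card_le_one.2 fun x hx y hy => ?_
  simp only [mem_filter, mem_univ, true_and] at hx hy
  by_contra hxy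
  rcases lt_or_gt_of_ne hxy with hlt | hgt
  · exact no_two_between x y hx.1 hlt hx.2.1 hx.2.2 hy.2.1 hy.2.2
  · exact no_two_between y x hy.1 hgt hy.2.1 hy.2.2 hx.2.1 hx.2.2

lemma lehmer_le_lehmer_add_one {n : ℕ} {w : Equiv.Perm (Fin n)}
    (h1423 : ¬ ContainsPattern w p1423) (h1432 : ¬ ContainsPattern w p1432)
    {a b : Fin n} (hab : a < b) : lehmer w b ≤ lehmer w a + 1 := by
  have hsplit : univ.filter (fun j => b < j ∧ w j < w b) ⊆
      univ.filter (fun j => a < j ∧ w j < w a) ∪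
        univ.filter (fun j => b < j ∧ w a < w j ∧ w j < w b) := by
    intro j hj
    simp only [mem_filter, mem_univ, true_and, mem_union] at hj ⊢
    rcases (w.injective.ne (hab.trans hj.1).ne').lt_or_gt with hja | haj
    · exact Or.inl ⟨hab.trans hj.1, hja⟩
    · exact Or.inr ⟨hj.1, haj, hj.2⟩
  calc lehmer w b ≤ lehmer w a + #{j | b < j ∧ w a < w j ∧ w j < w b} :=
        (card_le_card hsplit).trans (card_union_le _ _)
    _ ≤ lehmer w a + 1 := by grw [card_between_le_one h1423 h1432 hab]

theorem stmt_0 {n : ℕ} (w : Equiv.Perm (Fin n))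
    (h1423 : ¬ ContainsPattern w p1423) (h1432 : ¬ ContainsPattern w p1432) :
    ∀ i : ℕ, ∀ hi : i + 1 < n,
      lehmer w ⟨i + 1, hi⟩ ≤ lehmer w ⟨i, Nat.lt_of_succ_lt hi⟩ + 1 :=
  fun i _ => lehmer_le_lehmer_add_one h1423 h1432 (Fin.mk_lt_mk.2 i.lt_succ_self)
end

section
/- If a permutation w ∈ S_n has Lehmer code L satisfying L(i+1) - L(i) ≥ 2 for some i, then w contains the pattern 1423 or the pattern 1432. -/
/-! For `i < j`, every `k > j` counted by `L(j)` but not by `L(i)` has `w i < w k < w j`, so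
`L(j) - L(i) ≥ 2` produces two such positions `c < d`, and `i j c d` is an occurrence of
`1423` or `1432`. -/

section

variable {n : ℕ} (w : Equiv.Perm (Fin n))

theorem ContainsPattern.of_apply_eq_comp {k : ℕ} {σ : Fin k → Fin k} {f φ : Fin k → Fin n}
    (hf : StrictMono f) (hφ : StrictMono φ) (hw : ∀ a, w (f a) = φ (σ a)) :
    ContainsPattern w σ :=
  ⟨f, hf, fun a b => by rw [hw, hw, hφ.lt_iff_lt]⟩

theorem containsPattern_p1423_or_p1432 {a b c d : Fin n}
    (hab : a < b) (hbc : b < c) (hcd : c < d)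
    (hc : w c ∈ Set.Ioo (w a) (w b)) (hd : w d ∈ Set.Ioo (w a) (w b)) :
    ContainsPattern w p1423 ∨ ContainsPattern w p1432 := by
  have hf : StrictMono ![a, b, c, d] := by simp [hab, hbc, hcd]
  rcases lt_or_gt_of_ne (w.injective.ne hcd.ne) with hcd' | hdc'
  · refine .inl (.of_apply_eq_comp w (φ := ![w a, w c, w d, w b]) hf ?_ ?_)
    · simp [hc.1, hcd', hd.2]
    · intro x; fin_cases x <;> rfl
  · refine .inr (.of_apply_eq_comp w (φ := ![w a, w d, w c, w b]) hf ?_ ?_)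
    · simp [hd.1, hdc', hc.2]
    · intro x; fin_cases x <;> rfl

theorem lehmer_le_lehmer_add_card {i j : Fin n} (hij : i < j) :
    lehmer w j ≤
      lehmer w i + (Finset.univ.filter (fun k => j < k ∧ w k ∈ Set.Ioo (w i) (w j))).card := by
  refine (Finset.card_le_card fun k hk => ?_).trans (Finset.card_union_le _ _)
  simp only [Finset.mem_filter, Finset.mem_univ, true_and, Finset.mem_union, Set.mem_Ioo]
    at hk ⊢
  rcases lt_or_gt_of_ne (w.injective.ne (hij.trans hk.1).ne') with hki | hik
  · exact .inl ⟨hij.trans hk.1, hki⟩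
  · exact .inr ⟨hk.1, hik, hk.2⟩

theorem containsPattern_p1423_or_p1432_of_lehmer_add_two_le {i j : Fin n} (hij : i < j)
    (h : lehmer w i + 2 ≤ lehmer w j) :
    ContainsPattern w p1423 ∨ ContainsPattern w p1432 := by
  have hcard := lehmer_le_lehmer_add_card w hij
  obtain ⟨c, hc, d, hd, hcd⟩ := Finset.one_lt_card.mp (show
    1 < (Finset.univ.filter (fun k => j < k ∧ w k ∈ Set.Ioo (w i) (w j))).card by omega)
  simp only [Finset.mem_filter, Finset.mem_univ, true_and] at hc hd
  rcases lt_or_gt_of_ne hcd with hcd | hdc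
  · exact containsPattern_p1423_or_p1432 w hij hc.1 hcd hc.2 hd.2
  · exact containsPattern_p1423_or_p1432 w hij hd.1 hdc hd.2 hc.2

end

theorem stmt_1 {n : ℕ} (w : Equiv.Perm (Fin n)) (i : ℕ) (hi : i + 1 < n)
    (h : lehmer w ⟨i, Nat.lt_of_succ_lt hi⟩ + 2 ≤ lehmer w ⟨i + 1, hi⟩) :
    ContainsPattern w p1423 ∨ ContainsPattern w p1432 :=
  containsPattern_p1423_or_p1432_of_lehmer_add_two_le w (Fin.mk_lt_mk.mpr i.lt_succ_self) h
end

section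
/- If L(i+1) - L(i) ≥ 2 for the Lehmer code of w ∈ S_n at some index i, then there exist at least two distinct indices p, q > i+1 with w(i) < w(p) < w(i+1) and w(i) < w(q) < w(i+1). -/
open Finset

/- An inversion `(b, j)` with `a < b` is either an inversion `(a, j)` or has `w j` strictly
between `w a` and `w b`. -/
theorem lehmer_le_lehmer_add_card_between {n : ℕ} (w : Equiv.Perm (Fin n)) {a b : Fin n}
    (hab : a < b) :
    lehmer w b ≤ lehmer w a + #{j | b < j ∧ w a < w j ∧ w j < w b} := by
  refine (card_le_card fun j hj => ?_).trans (card_union_le _ _)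
  simp only [mem_filter, mem_union, mem_univ, true_and] at hj ⊢
  obtain ⟨hbj, hjb⟩ := hj
  rcases lt_trichotomy (w j) (w a) with hja | hja | haj
  · exact Or.inl ⟨hab.trans hbj, hja⟩
  · exact absurd (w.injective hja) (hab.trans hbj).ne'
  · exact Or.inr ⟨hbj, haj, hjb⟩

theorem stmt_2 {n : ℕ} (w : Equiv.Perm (Fin n)) (i : ℕ) (hi : i + 1 < n)
    (h : lehmer w ⟨i, Nat.lt_of_succ_lt hi⟩ + 2 ≤ lehmer w ⟨i + 1, hi⟩) :
    ∃ p q : Fin n, p ≠ q ∧ (⟨i + 1, hi⟩ : Fin n) < p ∧ (⟨i + 1, hi⟩ : Fin n) < q ∧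
      w ⟨i, Nat.lt_of_succ_lt hi⟩ < w p ∧ w p < w ⟨i + 1, hi⟩ ∧
      w ⟨i, Nat.lt_of_succ_lt hi⟩ < w q ∧ w q < w ⟨i + 1, hi⟩ := by
  have hlt : (⟨i, Nat.lt_of_succ_lt hi⟩ : Fin n) < ⟨i + 1, hi⟩ := Fin.mk_lt_mk.mpr i.lt_succ_self
  obtain ⟨p, hp, q, hq, hpq⟩ := one_lt_card.mp <|
    Nat.add_le_add_iff_left.mp (h.trans (lehmer_le_lehmer_add_card_between w hlt))
  simp only [mem_filter, mem_univ, true_and] at hp hq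
  exact ⟨p, q, hpq, hp.1, hq.1, hp.2.1, hp.2.2, hq.2.1, hq.2.2⟩
end

section
/- The polynomial x_2^2 x_3 + x_1 x_2 x_3 + x_1^2 x_3 + x_1^2 x_2 + x_1 x_2^2 (the Schubert polynomial of the permutation 1432) cannot be written as a product of two or more elementary symmetric polynomials e_{b_t}(x_1,...,x_{a_t}) with a_t, b_t ≥ 1, nor does it equal any single elementary symmetric polynomial e_b(x_1,...,x_a). -/
/-!
Evaluate at `x_1 = x_2 = x_3 = 1` and `x_i = 0` otherwise. The Schubert polynomial becomes `5`,
while `e_b(x_1, …, x_a)` becomes `C(min a 3, b) ≤ 3`. A product of natural numbers all smaller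
than the prime `5` cannot equal `5`.
-/

open MvPolynomial

/-- The elementary symmetric polynomial `e_k(x_1, …, x_m)`, with `x_i = X (i-1)`,
in the polynomial ring `ℚ[x_1, x_2, …]`. -/
noncomputable def esym (m k : ℕ) : MvPolynomial ℕ ℚ :=
  ∑ s ∈ Finset.powersetCard k (Finset.range m), ∏ i ∈ s, X i

/-- The Schubert polynomial of 1432 (with `x_i = X (i-1)`). -/
noncomputable def schub1432 : MvPolynomial ℕ ℚ :=
  X 1 ^ 2 * X 2 + X 0 * X 1 * X 2 + X 0 ^ 2 * X 2 + X 0 ^ 2 * X 1 + X 0 * X 1 ^ 2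

open Finset

theorem Finset.filter_subset_powersetCard {α : Type*} [DecidableEq α] (k : ℕ) (s t : Finset α) :
    (powersetCard k s).filter (· ⊆ t) = powersetCard k (s ∩ t) := by
  ext u
  simp only [mem_filter, mem_powersetCard, subset_inter_iff]
  tauto

theorem Finset.prod_ne_prime_of_forall_lt {ι : Type*} (s : Finset ι) (f : ι → ℕ) {p : ℕ}
    (hp : p.Prime) (hf : ∀ i ∈ s, f i < p) : ∏ i ∈ s, f i ≠ p := by
  intro hprod
  obtain ⟨i, hi, hpi⟩ := hp.prime.exists_mem_finset_dvd (dvd_of_eq hprod.symm)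
  have hzero : ∏ i ∈ s, f i = 0 := prod_eq_zero hi (Nat.eq_zero_of_dvd_of_lt hpi (hf i hi))
  exact hp.ne_zero (hprod ▸ hzero)

theorem eval_indicator_esym (n m k : ℕ) :
    eval (fun i => if i < n then 1 else 0) (esym m k) = ((min m n).choose k : ℚ) := by
  have heval : ∀ s : Finset ℕ,
      eval (fun i => if i < n then 1 else 0) (∏ i ∈ s, X i : MvPolynomial ℕ ℚ) =
        if s ⊆ range n then 1 else 0 := by
    intro s
    simp only [map_prod, eval_X, prod_ite_zero, prod_const_one, subset_iff, mem_range]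
  rw [esym, map_sum, sum_congr rfl fun s _ => heval s, sum_boole, filter_subset_powersetCard,
    range_inter_range, card_powersetCard, card_range]

theorem stmt_7 :
    ∀ r : ℕ, 1 ≤ r → ∀ a b : Fin r → ℕ,
      (∀ t, 1 ≤ a t) → (∀ t, 1 ≤ b t) →
      schub1432 ≠ ∏ t, esym (a t) (b t) := by
  intro r _ a b _ _ heq
  have hschub : eval (fun i => if i < 3 then 1 else 0) schub1432 = 5 := by
    norm_num [schub1432]
  have hprod : ∏ t, (min (a t) 3).choose (b t) = 5 := by
    have := congrArg (eval fun i => if i < 3 then 1 else 0) heq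
    rw [hschub, map_prod] at this
    simp only [eval_indicator_esym] at this
    exact_mod_cast this.symm
  refine prod_ne_prime_of_forall_lt _ _ Nat.prime_five (fun t _ => ?_) hprod
  calc (min (a t) 3).choose (b t) ≤ Nat.choose 3 (b t) :=
        Nat.choose_le_choose _ (min_le_right _ _)
    _ < 5 := (Nat.choose_le_middle _ 3).trans_lt (by decide)
end

section
/- If a homogeneous polynomial f of degree d equals ∏_{t=1}^r e_{b_t}(x_1,...,x_{a_t}) and f contains the monomial x_1^r x_2^r ··· x_B^r for some B, then every factor has degree b_t ≥ B; consequently if d = B·r then every b_t = B. -/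
open MvPolynomial

lemma coeff_esym_ne {m k : ℕ} {d : ℕ →₀ ℕ} (h : MvPolynomial.coeff d (esym m k) ≠ 0) :
    ∃ s : Finset ℕ, s.card = k ∧ d = ∑ i ∈ s, Finsupp.single i 1 := by
  unfold esym at h
  rw [MvPolynomial.coeff_sum] at h
  obtain ⟨s, hs, hne⟩ := Finset.exists_ne_zero_of_sum_ne_zero h
  refine ⟨s, (Finset.mem_powersetCard.mp hs).2, ?_⟩
  have : (∏ i ∈ s, (X i : MvPolynomial ℕ ℚ)) = monomial (∑ i ∈ s, Finsupp.single i 1) 1 := by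
    rw [monomial_sum_one]
    simp [X]
  rw [this, MvPolynomial.coeff_monomial] at hne
  split_ifs at hne with h'
  · exact h'.symm
  · simp at hne

lemma coeff_prod_ne {ι : Type*} [DecidableEq ι] (s : Finset ι) (f : ι → MvPolynomial ℕ ℚ)
    (μ : ℕ →₀ ℕ) (h : MvPolynomial.coeff μ (∏ t ∈ s, f t) ≠ 0) :
    ∃ g : ι → (ℕ →₀ ℕ), (∀ t ∈ s, MvPolynomial.coeff (g t) (f t) ≠ 0) ∧ ∑ t ∈ s, g t = μ := by
  induction s using Finset.induction generalizing μ with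
  | empty =>
    refine ⟨0, by simp, ?_⟩
    simp only [Finset.prod_empty, MvPolynomial.coeff_one] at h
    split_ifs at h with h'
    · simp [← h']
    · simp at h
  | insert c s' ha ih =>
    rw [Finset.prod_insert ha, MvPolynomial.coeff_mul] at h
    obtain ⟨⟨u, v⟩, huv, hne⟩ := Finset.exists_ne_zero_of_sum_ne_zero h
    have h1 : MvPolynomial.coeff u (f c) ≠ 0 := fun h0 => hne (by simp [h0])
    have h2 : MvPolynomial.coeff v (∏ t ∈ s', f t) ≠ 0 := fun h0 => hne (by simp [h0])
    obtain ⟨g, hg, hsum⟩ := ih v h2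
    refine ⟨Function.update g c u, ?_, ?_⟩
    · intro t ht
      rcases Finset.mem_insert.mp ht with rfl | ht'
      · simpa using h1
      · rw [Function.update_of_ne (by rintro rfl; exact ha ht')]
        exact hg t ht'
    · rw [Finset.sum_insert ha, Function.update_self]
      have : ∑ t ∈ s', Function.update g c u t = ∑ t ∈ s', g t :=
        Finset.sum_congr rfl fun t ht => Function.update_of_ne (by rintro rfl; exact ha ht) _ _
      rw [this, hsum]
      exact (Finset.HasAntidiagonal.mem_antidiagonal.mp huv)

theorem stmt_10 (r B : ℕ) (a b : Fin r → ℕ) (f : MvPolynomial ℕ ℚ)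
    (hf : f = ∏ t, esym (a t) (b t))
    (hc : MvPolynomial.coeff (∑ i ∈ Finset.range B, Finsupp.single i r) f ≠ 0) :
    (∀ t, B ≤ b t) ∧ ((∑ t, b t) = B * r → ∀ t, b t = B) := by
  subst hf
  obtain ⟨g, hg, hsum⟩ := coeff_prod_ne Finset.univ _ _ hc
  -- for each t, get the set s_t
  have hS : ∀ t : Fin r, ∃ s : Finset ℕ, s.card = b t ∧ g t = ∑ i ∈ s, Finsupp.single i 1 :=
    fun t => coeff_esym_ne (hg t (Finset.mem_univ t))
  choose S hScard hSval using hS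
  -- coordinates of μ
  have hμ : ∀ j, j < B → ∑ t : Fin r, (g t) j = r := by
    intro j hj
    have := congrArg (fun μ : ℕ →₀ ℕ => μ j) hsum
    simp only [Finsupp.finset_sum_apply] at this
    rw [this, Finset.sum_eq_single j]
    · simp
    · intro i _ hij
      simp [Finsupp.single_apply, hij]
    · intro hj'
      simp at hj'
      omega
  have hval : ∀ t (j : ℕ), (g t) j = if j ∈ S t then 1 else 0 := by
    intro t j
    rw [hSval t, Finsupp.finset_sum_apply]
    simp [Finsupp.single_apply, Finset.sum_ite_eq]
  have hle1 : ∀ t j, (g t) j ≤ 1 := by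
    intro t j; rw [hval]; split <;> omega
  -- each g t j = 1 for j < B
  have hone : ∀ (j : ℕ), j < B → ∀ t : Fin r, (g t) j = 1 := by
    intro j hj t
    by_contra hne
    have h0 : (g t) j = 0 := by have := hle1 t j; omega
    have : ∑ t : Fin r, (g t) j < ∑ _t : Fin r, 1 := by
      apply Finset.sum_lt_sum
      · intro i _; exact hle1 i j
      · exact ⟨t, Finset.mem_univ t, by omega⟩
    simp [hμ j hj] at this
  have hBle : ∀ t, B ≤ b t := by
    intro t
    have hsub : Finset.range B ⊆ S t := by
      intro j hj
      have := hone j (Finset.mem_range.mp hj) t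
      rw [hval] at this
      by_contra hmem
      simp [hmem] at this
    calc B = (Finset.range B).card := (Finset.card_range B).symm
      _ ≤ (S t).card := Finset.card_le_card hsub
      _ = b t := hScard t
  refine ⟨hBle, fun hd t => ?_⟩
  by_contra hne
  have hlt : B < b t := lt_of_le_of_ne (hBle t) (Ne.symm hne)
  have : B * r = ∑ _t : Fin r, B := by simp [mul_comm]
  have hlt2 : ∑ _t : Fin r, B < ∑ t, b t := by
    apply Finset.sum_lt_sum
    · intro i _; exact hBle i
    · exact ⟨t, Finset.mem_univ t, hlt⟩
  omega
end
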